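/- arXiv:math/0204163 — 3 statements merged into one kernel-verified Lean document; each statement's English description precedes it below -/
import Mathlib

section
/- Let s be a complex number with Re(s) > 1. For every t > 0 the family k ↦ (t²k²+1)^{-s/2}, indexed by k ∈ ℤ, is summable, and the limit as t → 0⁺ of t · Σ_{k∈ℤ} (t²k²+1)^{-s/2} exists and equals √π · Γ((s−1)/2) / Γ(s/2). -/
/-!
Write `f y = (y² + 1)^(-s/2)`. Then `t · Σₖ f (t k)` is the integral of the step function
`x ↦ f (t ⌊x / t⌋)`. As `t → 0⁺` these step functions converge pointwise to `f`, and since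
`|t ⌊x / t⌋ - x| ≤ t` they are dominated by a multiple of `(x² + 1)^(-Re s / 2)`, which is
integrable for `Re s > 1`; dominated convergence gives `t · Σₖ f (t k) → ∫ f`. The substitution
`x = 1 / (y² + 1)` turns `B((s - 1)/2, 1/2)` into `2 ∫_{y > 0} f = ∫ f` (`f` is even), and
`B(u, v) = Γ(u) Γ(v) / Γ(u + v)` with `Γ(1/2) = √π` evaluates it.
-/

open Filter Topology MeasureTheory Set

section RiemannSum

lemma abs_mul_floor_div_sub_le {t : ℝ} (ht : 0 < t) (x : ℝ) : |t * ⌊x / t⌋ - x| ≤ t := by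
  have h₁ := Int.floor_le (x / t)
  have h₂ := Int.lt_floor_add_one (x / t)
  rw [abs_le]
  constructor <;> nlinarith [mul_div_cancel₀ x ht.ne']

lemma measurable_mul_floor_div (t : ℝ) : Measurable fun x : ℝ => t * ⌊x / t⌋ :=
  (measurable_from_top (f := fun k : ℤ => t * (k : ℝ))).comp (measurable_id.div_const t).floor

lemma tendsto_mul_floor_div (x : ℝ) : Tendsto (fun t : ℝ => t * ⌊x / t⌋) (𝓝[>] 0) (𝓝 x) := by
  rw [tendsto_iff_norm_sub_tendsto_zero]
  refine squeeze_zero' (Eventually.of_forall fun t => norm_nonneg _) ?_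
    (tendsto_id.mono_left nhdsWithin_le_nhds)
  filter_upwards [self_mem_nhdsWithin] with t ht
  exact abs_mul_floor_div_sub_le ht x

lemma volume_preimage_floor_div {t : ℝ} (ht : 0 < t) (k : ℤ) :
    volume ((fun x : ℝ => ⌊x / t⌋) ⁻¹' {k}) = ENNReal.ofReal t := by
  change volume ((· * t⁻¹) ⁻¹' (Int.floor ⁻¹' {k})) = _
  rw [Int.preimage_floor_singleton, Real.volume_preimage_mul_right (inv_ne_zero ht.ne'),
    Real.volume_Ico]
  simp [abs_of_pos ht]

variable {E : Type*} [NormedAddCommGroup E] {f : ℝ → E} {g : ℝ → ℝ} {δ t : ℝ}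

lemma integrable_comp_mul_floor_div (ht : 0 < t) (htδ : t ≤ δ) (hf : Continuous f)
    (hg : Integrable g) (hfg : ∀ x y, |y - x| ≤ δ → ‖f y‖ ≤ g x) :
    Integrable fun x => f (t * ⌊x / t⌋) :=
  hg.mono' (hf.comp_aestronglyMeasurable (measurable_mul_floor_div t).aestronglyMeasurable) <|
    Eventually.of_forall fun x => hfg x _ ((abs_mul_floor_div_sub_le ht x).trans htδ)

variable [NormedSpace ℝ E] [CompleteSpace E]

lemma hasSum_integral_comp_mul_floor_div (ht : 0 < t)
    (hf : Integrable fun x => f (t * ⌊x / t⌋)) :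
    HasSum (fun k : ℤ => t • f (t * k)) (∫ x, f (t * ⌊x / t⌋)) := by
  have hfloor : Measurable fun x : ℝ => ⌊x / t⌋ := (measurable_id.div_const t).floor
  have hsum := hasSum_integral_iUnion (fun k => hfloor (measurableSet_singleton k))
    (pairwise_disjoint_fiber _) (hf.integrableOn (s := ⋃ k : ℤ, (fun x : ℝ => ⌊x / t⌋) ⁻¹' {k}))
  rw [← preimage_iUnion, iUnion_of_singleton, preimage_univ, setIntegral_univ] at hsum
  convert hsum using 2 with k
  rw [setIntegral_congr_fun (hfloor (measurableSet_singleton k))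
      (fun x (hx : ⌊x / t⌋ = k) => by rw [hx]),
    setIntegral_const, measureReal_def, volume_preimage_floor_div ht, ENNReal.toReal_ofReal ht.le]

lemma hasSum_comp_mul_int (ht : 0 < t) (htδ : t ≤ δ) (hf : Continuous f)
    (hg : Integrable g) (hfg : ∀ x y, |y - x| ≤ δ → ‖f y‖ ≤ g x) :
    HasSum (fun k : ℤ => f (t * k)) (t⁻¹ • ∫ x, f (t * ⌊x / t⌋)) := by
  simpa [smul_smul, ht.ne'] using (hasSum_integral_comp_mul_floor_div ht
    (integrable_comp_mul_floor_div ht htδ hf hg hfg)).const_smul t⁻¹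

theorem tendsto_smul_tsum_comp_mul_int (hδ : 0 < δ) (hf : Continuous f)
    (hg : Integrable g) (hfg : ∀ x y, |y - x| ≤ δ → ‖f y‖ ≤ g x) :
    Tendsto (fun t : ℝ => t • ∑' k : ℤ, f (t * k)) (𝓝[>] 0) (𝓝 (∫ x, f x)) := by
  have hsmall : ∀ᶠ t in 𝓝[>] (0 : ℝ), t ∈ Ioc 0 δ := Ioc_mem_nhdsGT hδ
  have hstep : Tendsto (fun t : ℝ => ∫ x, f (t * ⌊x / t⌋)) (𝓝[>] 0) (𝓝 (∫ x, f x)) := by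
    refine tendsto_integral_filter_of_dominated_convergence g ?_ ?_ hg ?_
    · exact Eventually.of_forall fun t =>
        hf.comp_aestronglyMeasurable (measurable_mul_floor_div t).aestronglyMeasurable
    · filter_upwards [hsmall] with t ht
      exact Eventually.of_forall fun x => hfg x _ ((abs_mul_floor_div_sub_le ht.1 x).trans ht.2)
    · exact Eventually.of_forall fun x => (hf.tendsto x).comp (tendsto_mul_floor_div x)
  refine hstep.congr' ?_
  filter_upwards [hsmall] with t ht
  rw [(hasSum_comp_mul_int ht.1 ht.2 hf hg hfg).tsum_eq, smul_inv_smul₀ ht.1.ne']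

end RiemannSum

lemma ofReal_cpow_eq_exp {a : ℝ} (ha : 0 < a) (z : ℂ) :
    (a : ℂ) ^ z = Complex.exp (Real.log a * z) := by
  rw [Complex.cpow_def_of_ne_zero (by exact_mod_cast ha.ne'), Complex.ofReal_log ha.le]

lemma image_inv_sq_add_one_Ioi : (fun y : ℝ => (y ^ 2 + 1)⁻¹) '' Ioi 0 = Ioo 0 1 := by
  ext x
  constructor
  · rintro ⟨y, hy, rfl⟩
    exact ⟨by positivity, inv_lt_one_of_one_lt₀ (by nlinarith [mem_Ioi.mp hy])⟩
  · rintro ⟨hx₀, hx₁⟩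
    have hx : 1 < x⁻¹ := one_lt_inv₀ hx₀ |>.mpr hx₁
    refine ⟨√(x⁻¹ - 1), Real.sqrt_pos.mpr (by linarith), ?_⟩
    simp only [Real.sq_sqrt (by linarith : 0 ≤ x⁻¹ - 1), sub_add_cancel, inv_inv]

lemma strictAntiOn_inv_sq_add_one : StrictAntiOn (fun y : ℝ => (y ^ 2 + 1)⁻¹) (Ioi 0) :=
  fun a ha b _ hab => inv_strictAnti₀ (by positivity) (by nlinarith [mem_Ioi.mp ha])

lemma abs_deriv_smul_betaIntegrand_inv_sq_add_one (u : ℂ) {y : ℝ} (hy : 0 < y) :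
    |-(2 * y) / (y ^ 2 + 1) ^ 2| • ((((y ^ 2 + 1)⁻¹ : ℝ) : ℂ) ^ (u - 1) *
      (1 - (((y ^ 2 + 1)⁻¹ : ℝ) : ℂ)) ^ ((1 : ℂ) / 2 - 1)) =
      2 * ((y ^ 2 + 1 : ℝ) : ℂ) ^ (-(u + 1 / 2)) := by
  have hc : 0 < y ^ 2 + 1 := by positivity
  have hc' : (y : ℂ) ^ 2 + 1 ≠ 0 := by exact_mod_cast hc.ne'
  have hy' : (y : ℂ) ≠ 0 := by exact_mod_cast hy.ne'
  have h₁ : 1 - (((y ^ 2 + 1)⁻¹ : ℝ) : ℂ) = ((y ^ 2 / (y ^ 2 + 1) : ℝ) : ℂ) := by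
    push_cast
    field_simp
    ring
  rw [h₁, ofReal_cpow_eq_exp (by positivity), ofReal_cpow_eq_exp (by positivity),
    ofReal_cpow_eq_exp hc, Real.log_inv, Real.log_div (by positivity) hc.ne', Real.log_pow,
    ← Complex.exp_add, abs_div, abs_neg, abs_of_pos (by positivity), abs_of_pos (by positivity),
    Complex.real_smul]
  set L := Real.log (y ^ 2 + 1)
  have hexp : (-L : ℂ) * (u - 1) + ((2 * Real.log y - L : ℝ) : ℂ) * (1 / 2 - 1) =
      L * (-(u + 1 / 2)) + ((2 * L - Real.log y : ℝ) : ℂ) := by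
    push_cast
    ring
  have hjac : Real.exp (2 * L - Real.log y) = (y ^ 2 + 1) ^ 2 / y := by
    rw [Real.exp_sub, Real.exp_log hy, two_mul, Real.exp_add, Real.exp_log hc]
    ring
  push_cast at hexp ⊢
  rw [hexp, Complex.exp_add, show 2 * (L : ℂ) - Real.log y = ((2 * L - Real.log y : ℝ) : ℂ) by
    push_cast; ring, ← Complex.ofReal_exp, hjac]
  push_cast
  field_simp

lemma integral_eq_two_nsmul_integral_Ioi_of_even {E : Type*} [NormedAddCommGroup E]
    [NormedSpace ℝ E] {f : ℝ → E} (heven : ∀ x, f (-x) = f x) (hf : Integrable f) :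
    ∫ x, f x = 2 • ∫ x in Ioi 0, f x := by
  rw [← integral_add_compl measurableSet_Iic hf, compl_Iic, two_nsmul]
  congr 1
  simpa [heven] using integral_comp_neg_Iic 0 f

lemma betaIntegral_one_half_right (u : ℂ) :
    Complex.betaIntegral u (1 / 2) = 2 * ∫ y in Ioi 0, ((y ^ 2 + 1 : ℝ) : ℂ) ^ (-(u + 1 / 2)) := by
  have hderiv : ∀ y ∈ Ioi (0 : ℝ),
      HasDerivWithinAt (fun y : ℝ => (y ^ 2 + 1)⁻¹) (-(2 * y) / (y ^ 2 + 1) ^ 2) (Ioi 0) y :=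
    fun y _ => (((hasDerivAt_pow 2 y).add_const 1).inv (by positivity)).hasDerivWithinAt.congr_deriv
      (by ring)
  have hsub := integral_image_eq_integral_abs_deriv_smul measurableSet_Ioi hderiv
    strictAntiOn_inv_sq_add_one.injOn
    fun x : ℝ => (x : ℂ) ^ (u - 1) * (1 - (x : ℂ)) ^ ((1 : ℂ) / 2 - 1)
  rw [image_inv_sq_add_one_Ioi, setIntegral_congr_fun measurableSet_Ioi
    fun y hy => abs_deriv_smul_betaIntegrand_inv_sq_add_one u hy, integral_const_mul] at hsub
  rw [Complex.betaIntegral, intervalIntegral.integral_of_le zero_le_one,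
    integral_Ioc_eq_integral_Ioo, hsub]

/-- `⟨y⟩^(-s)` for the Japanese bracket `⟨y⟩ = √(y² + 1)`. -/
noncomputable def bracketCpow (s : ℂ) (y : ℝ) : ℂ := ((y ^ 2 + 1 : ℝ) : ℂ) ^ (-s / 2)

lemma norm_bracketCpow (s : ℂ) (y : ℝ) : ‖bracketCpow s y‖ = (y ^ 2 + 1) ^ (-s.re / 2) := by
  rw [bracketCpow, Complex.norm_cpow_eq_rpow_re_of_pos (by positivity)]
  norm_num [Complex.div_re]

lemma continuous_bracketCpow (s : ℂ) : Continuous (bracketCpow s) :=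
  (Complex.continuous_ofReal.comp (by fun_prop)).cpow continuous_const fun y =>
    Complex.ofReal_mem_slitPlane.mpr (by positivity)

lemma bracketCpow_neg (s : ℂ) (y : ℝ) : bracketCpow s (-y) = bracketCpow s y := by
  simp [bracketCpow]

lemma integrable_sq_add_one_rpow_neg {σ : ℝ} (hσ : 1 < σ) :
    Integrable fun x : ℝ => (x ^ 2 + 1) ^ (-σ / 2) := by
  simpa [add_comm] using integrable_rpow_neg_one_add_norm_sq (E := ℝ) (r := σ) (by simpa using hσ)

lemma integrable_bracketCpow {s : ℂ} (hs : 1 < s.re) : Integrable (bracketCpow s) := by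
  refine (integrable_sq_add_one_rpow_neg hs).mono'
    (continuous_bracketCpow s).aestronglyMeasurable ?_
  exact Eventually.of_forall fun y => (norm_bracketCpow s y).le

lemma norm_bracketCpow_le {s : ℂ} (hs : 0 ≤ s.re) {δ x y : ℝ} (h : |y - x| ≤ δ) :
    ‖bracketCpow s y‖ ≤ (2 + 2 * δ ^ 2) ^ (s.re / 2) * (x ^ 2 + 1) ^ (-s.re / 2) := by
  have hxy : x ^ 2 + 1 ≤ (2 + 2 * δ ^ 2) * (y ^ 2 + 1) := by
    have := sq_le_sq' (abs_le.mp h).1 (abs_le.mp h).2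
    nlinarith [sq_nonneg (x - 2 * y), sq_nonneg y, sq_nonneg δ]
  calc ‖bracketCpow s y‖ = (y ^ 2 + 1) ^ (-s.re / 2) := norm_bracketCpow s y
    _ ≤ ((x ^ 2 + 1) / (2 + 2 * δ ^ 2)) ^ (-s.re / 2) :=
      Real.rpow_le_rpow_of_nonpos (by positivity) (div_le_of_le_mul₀ (by positivity)
        (by positivity) (by linarith)) (by linarith)
    _ = (2 + 2 * δ ^ 2) ^ (s.re / 2) * (x ^ 2 + 1) ^ (-s.re / 2) := by
      rw [Real.div_rpow (by positivity) (by positivity), div_eq_mul_inv,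
        ← Real.rpow_neg (by positivity), neg_div, neg_neg, mul_comm]

lemma integral_bracketCpow {s : ℂ} (hs : 1 < s.re) :
    ∫ x, bracketCpow s x =
      Real.sqrt Real.pi * Complex.Gamma ((s - 1) / 2) / Complex.Gamma (s / 2) := by
  have hu : 0 < ((s - 1) / 2).re := by
    rw [Complex.div_ofNat_re, Complex.sub_re, Complex.one_re]
    linarith
  have hsqrt : ((Real.sqrt Real.pi : ℝ) : ℂ) = (Real.pi : ℂ) ^ (1 / 2 : ℂ) := by
    rw [Real.sqrt_eq_rpow, Complex.ofReal_cpow Real.pi_pos.le]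
    norm_num
  have hbeta := betaIntegral_one_half_right ((s - 1) / 2)
  rw [Complex.betaIntegral_eq_Gamma_mul_div _ _ hu (by norm_num), Complex.Gamma_one_half_eq,
    ← hsqrt, show (s - 1) / 2 + 1 / 2 = s / 2 by ring, show -(s / 2) = -s / 2 by ring] at hbeta
  rw [integral_eq_two_nsmul_integral_Ioi_of_even (bracketCpow_neg s) (integrable_bracketCpow hs),
    nsmul_eq_mul, Nat.cast_ofNat]
  unfold bracketCpow
  rw [← hbeta]
  ring

/-- For complex `s` with `Re(s) > 1`: for every `t > 0` the family
`k ↦ (t²k²+1)^(−s/2)` (`k ∈ ℤ`) is summable, and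
`t · Σ_{k∈ℤ} (t²k²+1)^(−s/2) → √π · Γ((s−1)/2) / Γ(s/2)` as `t → 0⁺`. -/
theorem adiabatic_limit_circle_zeta (s : ℂ) (hs : 1 < s.re) :
    (∀ t : ℝ, 0 < t →
      Summable fun k : ℤ => ((t ^ 2 * (k : ℝ) ^ 2 + 1 : ℝ) : ℂ) ^ (-s / 2)) ∧
    Tendsto (fun t : ℝ => (t : ℂ) * ∑' k : ℤ, ((t ^ 2 * (k : ℝ) ^ 2 + 1 : ℝ) : ℂ) ^ (-s / 2))
      (𝓝[>] 0)
      (𝓝 ((Real.sqrt Real.pi : ℂ) * Complex.Gamma ((s - 1) / 2) / Complex.Gamma (s / 2))) := by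
  have hdom (δ : ℝ) : ∀ x y, |y - x| ≤ δ →
      ‖bracketCpow s y‖ ≤ (2 + 2 * δ ^ 2) ^ (s.re / 2) * (x ^ 2 + 1) ^ (-s.re / 2) :=
    fun _ _ => norm_bracketCpow_le (by linarith)
  have hbound (δ : ℝ) :
      Integrable fun x : ℝ => (2 + 2 * δ ^ 2) ^ (s.re / 2) * (x ^ 2 + 1) ^ (-s.re / 2) :=
    (integrable_sq_add_one_rpow_neg hs).const_mul _
  have hsummand (t : ℝ) : (fun k : ℤ => ((t ^ 2 * (k : ℝ) ^ 2 + 1 : ℝ) : ℂ) ^ (-s / 2)) =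
      fun k : ℤ => bracketCpow s (t * k) := by
    ext k
    rw [bracketCpow, mul_pow]
  refine ⟨fun t ht => ?_, ?_⟩
  · rw [hsummand]
    exact (hasSum_comp_mul_int ht le_rfl (continuous_bracketCpow s) (hbound t) (hdom t)).summable
  · rw [← integral_bracketCpow hs]
    simp_rw [hsummand, ← Complex.real_smul]
    exact tendsto_smul_tsum_comp_mul_int one_pos (continuous_bracketCpow s) (hbound 1) (hdom 1)
end

section
/- Let d ≥ 1 be an integer, k a real number, and h : ℂ × S^{d−1} → ℂ a jointly continuous function that is analytic in its first variable for each fixed point of the sphere. Define F(s) := −1/(s+k+d) · ∫_{S^{d−1}} h(s,θ) dσ(θ) for s ≠ −k−d. Then: (i) F is analytic on ℂ ∖ {−k−d}; (ii) for every complex s with Re(s) + k + d < 0 one has F(s) = ∫_{‖v‖≥1} h(s, v/‖v‖)·‖v‖^{s+k} dv; and (iii) (s+k+d)·F(s) → −∫_{S^{d−1}} h(−k−d, θ) dσ(θ) as s → −k−d. In other words, the integral in (ii), a priori defined on the half-plane Re(s) < −k−d, extends analytically to ℂ with a single simple pole at s = −k−d whose residue is −∫_{S^{d−1}} h(−k−d,·)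 dσ. -/
open MeasureTheory Metric Filter Topology Set

/-!
In polar coordinates `v = r • θ` Lebesgue measure becomes `σ ⊗ r ^ (d - 1) dr`, so for
`Re s + k + d < 0` the integral splits as `∫ h(s, θ) dσ(θ) · ∫_1^∞ r ^ (s + k + d - 1) dr`, and the
radial factor is `-1 / (s + k + d)`. The angular factor `G(s) = ∫ h(s, θ) dσ(θ)` is entire:
differentiation under the integral sign is dominated by Cauchy estimates, which are uniform on
(disc) × (sphere) by compactness. Hence `F = -G / (s + k + d)` is analytic off the pole and
`(s + k + d) F = -G` extends continuously across it.
-/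

section Polar

lemma integral_volumeIoiPow {F : Type*} [NormedAddCommGroup F] [NormedSpace ℝ F]
    (n : ℕ) (g : ℝ → F) :
    ∫ r, g r ∂(Measure.volumeIoiPow n) = ∫ r in Ioi (0 : ℝ), r ^ n • g r := by
  rw [Measure.volumeIoiPow, integral_withDensity_eq_integral_toReal_smul
      (by fun_prop) (ae_of_all _ fun _ => ENNReal.ofReal_lt_top),
    ← integral_subtype_comap measurableSet_Ioi]
  refine integral_congr_ae (ae_of_all _ fun r => ?_)
  simp only [ENNReal.toReal_ofReal (pow_nonneg (le_of_lt r.2) n)]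

variable {E : Type*} [NormedAddCommGroup E] [NormedSpace ℝ E] [FiniteDimensional ℝ E]
  [MeasurableSpace E] [BorelSpace E] [Nontrivial E]

theorem integral_unitSphere_mul_radial {𝕜 : Type*} [RCLike 𝕜] (μ : Measure E)
    [μ.IsAddHaarMeasure] (f : E → 𝕜) (g : ℝ → 𝕜) :
    ∫ v, f (‖v‖⁻¹ • v) * g ‖v‖ ∂μ =
      (∫ θ : sphere (0 : E) 1, f θ ∂μ.toSphere) *
        ∫ r in Ioi (0 : ℝ), r ^ (Module.finrank ℝ E - 1) • g r := by
  conv_lhs => rw [← restrict_compl_singleton (μ := μ) 0]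
  rw [← integral_subtype_comap (measurableSet_singleton 0).compl, ← integral_volumeIoiPow,
    ← integral_prod_mul, ← μ.measurePreserving_homeomorphUnitSphereProd.integral_comp
      (Homeomorph.measurableEmbedding _)]
  simp [homeomorphUnitSphereProd]

end Polar

lemma integral_Ioi_zero_pow_smul_indicator_cpow {a : ℂ} {n : ℕ} (ha : a.re + n + 1 < 0) :
    ∫ r in Ioi (0 : ℝ), r ^ n • (Ici 1).indicator (fun r : ℝ => (r : ℂ) ^ a) r =
      -1 / (a + n + 1) := by
  have hre : (a + n).re < -1 := by simp; linarith
  calc ∫ r in Ioi (0 : ℝ), r ^ n • (Ici 1).indicator (fun r : ℝ => (r : ℂ) ^ a) r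
      = ∫ r in Ioi (0 : ℝ), (Ici 1).indicator (fun r : ℝ => (r : ℂ) ^ (a + n)) r := by
        refine setIntegral_congr_fun measurableSet_Ioi fun r (hr : 0 < r) => ?_
        by_cases h1 : 1 ≤ r
        · simp [h1, Complex.cpow_add _ _ (Complex.ofReal_ne_zero.2 hr.ne'), mul_comm]
        · simp [h1]
    _ = ∫ r in Ioi (1 : ℝ), (r : ℂ) ^ (a + n) := by
        rw [setIntegral_indicator measurableSet_Ici,
          inter_eq_self_of_subset_right (Ici_subset_Ioi.2 zero_lt_one),
          integral_Ici_eq_integral_Ioi]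
    _ = -1 / (a + n + 1) := by
        rw [integral_Ioi_cpow_of_lt hre one_pos, Complex.ofReal_one, Complex.one_cpow]

section HolomorphicParametricIntegral

variable {X : Type*} [TopologicalSpace X] [CompactSpace X]
  {E : Type*} [NormedAddCommGroup E] [NormedSpace ℂ E] {h : ℂ → X → E}

lemma exists_bound_norm_deriv_of_continuous_uncurry (hcont : Continuous (Function.uncurry h))
    (hdiff : ∀ x, Differentiable ℂ (h · x)) (s₀ : ℂ) :
    ∃ C, ∀ x, ∀ z ∈ ball s₀ 1, ‖deriv (h · x) z‖ ≤ C := by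
  obtain ⟨C, hC⟩ := ((isCompact_closedBall s₀ 2).prod isCompact_univ).exists_bound_of_continuousOn
    hcont.continuousOn
  refine ⟨C, fun x z hz => ?_⟩
  refine div_one C ▸ Complex.norm_deriv_le_of_forall_mem_sphere_norm_le (c := z) one_pos
    (hdiff x).diffContOnCl fun w hw => hC (w, x) ⟨?_, mem_univ x⟩
  rw [mem_closedBall]
  linarith [dist_triangle w z s₀, mem_sphere.1 hw, mem_ball.1 hz]

variable [MeasurableSpace X] [OpensMeasurableSpace X] [SecondCountableTopologyEither X E]
  [CompleteSpace E]

theorem differentiable_integral_of_continuous_uncurry (μ : Measure X) [IsFiniteMeasure μ]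
    (hcont : Continuous (Function.uncurry h)) (hdiff : ∀ x, Differentiable ℂ (h · x)) :
    Differentiable ℂ fun s => ∫ x, h s x ∂μ := by
  intro s₀
  obtain ⟨C, hC⟩ := exists_bound_norm_deriv_of_continuous_uncurry hcont hdiff s₀
  have hmeas : ∀ s, Continuous (h s) := fun s => hcont.comp (continuous_const.prodMk continuous_id)
  have hderiv_meas : AEStronglyMeasurable (fun x => deriv (h · x) s₀) μ :=
    ((stronglyMeasurable_deriv_with_param (f := fun x s => h s x)
      (hcont.comp continuous_swap)).comp_measurable
      (measurable_id.prodMk measurable_const)).aestronglyMeasurable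
  exact (hasDerivAt_integral_of_dominated_loc_of_deriv_le (ball_mem_nhds s₀ one_pos)
    (Eventually.of_forall fun s => (hmeas s).aestronglyMeasurable)
    ((hmeas s₀).integrable_of_hasCompactSupport (HasCompactSupport.of_compactSpace _))
    hderiv_meas (ae_of_all _ fun x => hC x) (integrable_const C)
    (ae_of_all _ fun x z _ => (hdiff x z).hasDerivAt)).2.differentiableAt

end HolomorphicParametricIntegral

/-- Let `d ≥ 1`, `k ∈ ℝ`, and `h(s, θ)` be jointly continuous on
`ℂ × S^{d−1}` and analytic in `s` for each fixed `θ` on the sphere.  Set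
`F(s) = −1/(s+k+d) · ∫_{S^{d−1}} h(s,θ) dσ(θ)`.  Then (i) `F` is analytic on
`ℂ ∖ {−k−d}`; (ii) for `Re(s) + k + d < 0`,
`F(s) = ∫_{‖v‖≥1} h(s, v/‖v‖)·‖v‖^{s+k} dv`; (iii)
`(s+k+d)·F(s) → −∫_{S^{d−1}} h(−k−d,·) dσ` as `s → −k−d`:  the integral extends
analytically to `ℂ` with a single simple pole at `s = −k−d`. -/
theorem analytic_extension_homogeneous_integral (d : ℕ) (hd : 1 ≤ d) (k : ℝ)
    (h : ℂ → EuclideanSpace ℝ (Fin d) → ℂ)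
    (hcont : ContinuousOn (fun p : ℂ × EuclideanSpace ℝ (Fin d) => h p.1 p.2)
      (univ ×ˢ sphere (0 : EuclideanSpace ℝ (Fin d)) 1))
    (hanal : ∀ θ ∈ sphere (0 : EuclideanSpace ℝ (Fin d)) 1, ∀ s : ℂ,
      AnalyticAt ℂ (fun z => h z θ) s)
    (F : ℂ → ℂ)
    (hF : ∀ s : ℂ, F s = -1 / (s + (k : ℂ) + (d : ℂ)) *
      ∫ θ : sphere (0 : EuclideanSpace ℝ (Fin d)) 1, h s θ
        ∂(volume : Measure (EuclideanSpace ℝ (Fin d))).toSphere) :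
    (∀ s : ℂ, s ≠ -((k : ℂ) + (d : ℂ)) → AnalyticAt ℂ F s) ∧
    (∀ s : ℂ, s.re + k + d < 0 →
      F s = ∫ v in {v : EuclideanSpace ℝ (Fin d) | 1 ≤ ‖v‖},
        h s (‖v‖⁻¹ • v) * (‖v‖ : ℂ) ^ (s + (k : ℂ))) ∧
    Tendsto (fun s : ℂ => (s + (k : ℂ) + (d : ℂ)) * F s)
      (𝓝[≠] (-((k : ℂ) + (d : ℂ))))
      (𝓝 (-∫ θ : sphere (0 : EuclideanSpace ℝ (Fin d)) 1, h (-((k : ℂ) + (d : ℂ))) θ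
        ∂(volume : Measure (EuclideanSpace ℝ (Fin d))).toSphere)) := by
  have : Nontrivial (EuclideanSpace ℝ (Fin d)) :=
    Module.nontrivial_of_finrank_pos (R := ℝ) (by rw [finrank_euclideanSpace_fin]; omega)
  set σ := (volume : Measure (EuclideanSpace ℝ (Fin d))).toSphere
  set G : ℂ → ℂ := fun s => ∫ θ : sphere (0 : EuclideanSpace ℝ (Fin d)) 1, h s θ ∂σ
  have hG : Differentiable ℂ G :=
    differentiable_integral_of_continuous_uncurry σ
      (hcont.comp_continuous (continuous_fst.prodMk (continuous_subtype_val.comp continuous_snd))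
        fun p => ⟨mem_univ _, p.2.2⟩)
      fun θ z => (hanal θ θ.2 z).differentiableAt
  have hFG : ∀ s, F s = -1 / (s + k + d) * G s := hF
  refine ⟨fun s hs => ?_, fun s hs => ?_, ?_⟩
  · have hne : s + k + d ≠ 0 := fun h0 => hs (by linear_combination h0)
    rw [funext hFG]
    exact (analyticAt_const.div ((analyticAt_id.add analyticAt_const).add analyticAt_const)
      hne).mul (hG.analyticAt s)
  · have hre : (s + k).re + (d - 1 : ℕ) + 1 < 0 := by
      simp only [Complex.add_re, Complex.ofReal_re, Nat.cast_sub hd, Nat.cast_one]; linarith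
    have hradial : ∫ r in Ioi (0 : ℝ), r ^ (d - 1) •
        (Ici 1).indicator (fun r : ℝ => (r : ℂ) ^ (s + k)) r = -1 / (s + k + d) := by
      rw [integral_Ioi_zero_pow_smul_indicator_cpow hre, Nat.cast_sub hd]; ring_nf
    have hpolar := integral_unitSphere_mul_radial (volume : Measure (EuclideanSpace ℝ (Fin d)))
      (h s) ((Ici 1).indicator fun r : ℝ => (r : ℂ) ^ (s + k))
    rw [finrank_euclideanSpace_fin, hradial] at hpolar
    rw [hFG, mul_comm, ← hpolar,
      ← integral_indicator (measurableSet_le measurable_const measurable_norm)]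
    congr 1 with v
    by_cases hv : 1 ≤ ‖v‖ <;> simp [hv]
  · refine (hG.continuous.neg.continuousAt.continuousWithinAt).congr' ?_
    filter_upwards [self_mem_nhdsWithin] with s (hs : s ≠ _)
    rw [Pi.neg_apply, hFG]
    field_simp [show s + k + d ≠ 0 from fun h0 => hs (by linear_combination h0)]
end

section
/- Let n ≥ 1 and let d : ℝ → M_n(ℂ) be a continuously differentiable family of invertible Hermitian matrices. Then the function μ ↦ tr((d(μ)²)^{-1/2} · d(μ)) is constant. -/
/-!
The functional calculus turns `(x²)^{-1/2} · x` into `sign x`, so `tr((d²)^{-1/2} · d)` is the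
sum of the signs of the eigenvalues of `d`: an integer, the signature. On the other hand, since
`d(μ)` is invertible the spectra of `d(μ)²` stay away from `0`, where `x ↦ x^{-1/2}` is
continuous, and the continuous functional calculus of a C⋆-algebra (here matrices with the
operator norm) is then continuous in its argument. A continuous integer-valued function on `ℝ` is
constant.
-/

open Matrix

/-- This also holds at `x = 0`, where `Real.rpow` gives `0 ^ (-1/2) = 0`. -/
theorem Real.sq_rpow_neg_half_mul_self_eq_sign (x : ℝ) :
    (x ^ 2) ^ (-(1 : ℝ) / 2) * x = SignType.sign x := by
  rw [← sq_abs, ← Real.rpow_natCast, ← Real.rpow_mul (abs_nonneg x)]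
  norm_num [Real.rpow_neg_one]
  rcases lt_trichotomy x 0 with h | rfl | h
  · simp [abs_of_neg h, h, h.ne]
  · simp
  · simp [abs_of_pos h, h, h.ne']

theorem Continuous.cfc_rpow_const {X A : Type*} [TopologicalSpace X] [NormedRing A] [StarRing A]
    [NormedAlgebra ℝ A] [CompleteSpace A] [ContinuousStar A]
    [IsometricContinuousFunctionalCalculus ℝ A IsSelfAdjoint] {a : X → A} (ha : Continuous a)
    (hsa : ∀ x, IsSelfAdjoint (a x)) (hu : ∀ x, IsUnit (a x)) (r : ℝ) :
    Continuous fun x => cfc (fun t : ℝ => t ^ r) (a x) := by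
  refine ha.cfc_of_mem_nhdsSet (s := {0}ᶜ) _ (isOpen_compl_singleton.mem_nhdsSet.2 ?_) hsa ?_
  · simp only [Set.iUnion_subset_iff]
    exact fun x t ht (h0 : t = 0) => spectrum.zero_notMem ℝ (hu x) (h0 ▸ ht)
  · exact fun t ht => (Real.continuousAt_rpow_const t r (Or.inl ht)).continuousWithinAt

theorem PreconnectedSpace.constant_of_continuous_intCast {X : Type*} [TopologicalSpace X]
    [hX : PreconnectedSpace X] {f : X → ℤ} (hf : Continuous fun x => (f x : ℂ)) (x y : X) :
    f x = f y := by
  have hcast : Topology.IsEmbedding (fun k : ℤ => (k : ℂ)) :=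
    Complex.isometry_ofReal.isEmbedding.comp Int.isClosedEmbedding_coe_real.isEmbedding
  exact hX.constant (hcast.continuous_iff.2 hf)

namespace Matrix.IsHermitian

variable {𝕜 n : Type*} [RCLike 𝕜] [Fintype n] [DecidableEq n] {A : Matrix n n 𝕜}

noncomputable def signature (hA : A.IsHermitian) : ℤ :=
  ∑ i, (SignType.sign (hA.eigenvalues i) : ℤ)

theorem trace_cfc (hA : A.IsHermitian) (f : ℝ → ℝ) :
    (cfc f A).trace = ∑ i, (f (hA.eigenvalues i) : 𝕜) := by
  rw [hA.cfc_eq, IsHermitian.cfc, Unitary.conjStarAlgAut_apply, trace_mul_cycle,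
    Unitary.coe_star_mul_self, one_mul, trace_diagonal]
  rfl

theorem cfc_rpow_neg_half_sq_mul_self_eq_cfc_sign (hA : A.IsHermitian) :
    cfc (fun x : ℝ => x ^ (-(1 : ℝ) / 2)) (A ^ 2) * A =
      cfc (fun x : ℝ => (SignType.sign x : ℝ)) A := by
  rw [← cfc_pow_id (R := ℝ) A 2,
    ← cfc_comp' _ _ A ((finite_real_spectrum.image _).continuousOn _)]
  conv_lhs => enter [2]; rw [← cfc_id' ℝ A]
  rw [← cfc_mul _ _ A (finite_real_spectrum.continuousOn _) (finite_real_spectrum.continuousOn _)]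
  simp only [Real.sq_rpow_neg_half_mul_self_eq_sign]

theorem trace_cfc_rpow_neg_half_sq_mul_self_eq_signature (hA : A.IsHermitian) :
    (cfc (fun x : ℝ => x ^ (-(1 : ℝ) / 2)) (A ^ 2) * A).trace = hA.signature := by
  simp [cfc_rpow_neg_half_sq_mul_self_eq_cfc_sign hA, trace_cfc hA, signature, SignType.map_cast]

end Matrix.IsHermitian

theorem eta_invariant_constant_along_invertible_path_general (n : ℕ)
    (d d' : ℝ → Matrix (Fin n) (Fin n) ℂ)
    (hderiv : ∀ (μ : ℝ) (i j : Fin n), HasDerivAt (fun ν => d ν i j) (d' μ i j) μ)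
    (hherm : ∀ μ : ℝ, (d μ).IsHermitian)
    (hinv : ∀ μ : ℝ, IsUnit (d μ)) :
    ∀ μ₁ μ₂ : ℝ,
      (cfc (fun x : ℝ => x ^ (-(1 : ℝ) / 2)) ((d μ₁) ^ 2) * d μ₁).trace =
      (cfc (fun x : ℝ => x ^ (-(1 : ℝ) / 2)) ((d μ₂) ^ 2) * d μ₂).trace := by
  have hd : Continuous d := continuous_pi fun i => continuous_pi fun j =>
    continuous_iff_continuousAt.2 fun μ => (hderiv μ i j).continuousAt
  have hsignature : Continuous fun μ => ((hherm μ).signature : ℂ) := by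
    simp only [← (hherm _).trace_cfc_rpow_neg_half_sq_mul_self_eq_signature]
    open scoped Matrix.Norms.L2Operator in
    exact ((hd.pow 2).cfc_rpow_const (fun μ => (hherm μ).isSelfAdjoint.pow 2)
      (fun μ => (hinv μ).pow 2) _ |>.mul hd).matrix_trace
  intro μ₁ μ₂
  rw [(hherm μ₁).trace_cfc_rpow_neg_half_sq_mul_self_eq_signature,
    (hherm μ₂).trace_cfc_rpow_neg_half_sq_mul_self_eq_signature,
    PreconnectedSpace.constant_of_continuous_intCast hsignature μ₁ μ₂]

/-- Let `d : ℝ → M_n(ℂ)` be a `C¹` family of invertible Hermitian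
matrices (with derivative family `d'`).  Then `μ ↦ tr((d(μ)²)^{−1/2} · d(μ))` -- the
signature of `d(μ)` -- is constant.  The inverse square root of the positive definite
Hermitian matrix `d(μ)²` is taken by the continuous functional calculus. -/
theorem eta_invariant_constant_along_invertible_path (n : ℕ) (hn : 1 ≤ n)
    (d d' : ℝ → Matrix (Fin n) (Fin n) ℂ)
    (hderiv : ∀ (μ : ℝ) (i j : Fin n), HasDerivAt (fun ν => d ν i j) (d' μ i j) μ)
    (hcont : ∀ i j : Fin n, Continuous fun μ => d' μ i j)
    (hherm : ∀ μ : ℝ, (d μ).IsHermitian)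
    (hinv : ∀ μ : ℝ, IsUnit (d μ)) :
    ∀ μ₁ μ₂ : ℝ,
      (cfc (fun x : ℝ => x ^ (-(1 : ℝ) / 2)) ((d μ₁) ^ 2) * d μ₁).trace =
      (cfc (fun x : ℝ => x ^ (-(1 : ℝ) / 2)) ((d μ₂) ^ 2) * d μ₂).trace :=
  eta_invariant_constant_along_invertible_path_general n d d' hderiv hherm hinv
end
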